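/- In a symplectic vector space (X, ω), every Fredholm pair (λ, μ) of Lagrangian subspaces has non-positive index: Index(λ,μ) = dim(λ∩μ) − dim X/(λ+μ) ≤ 0. -/
import Mathlib


universe u

/-- The annihilator `λ^ω = {y ∈ X : ω(x,y) = 0 for all x ∈ λ}` of a subspace of a
complex vector space with a sesquilinear form `ω` (linear in the first,
conjugate-linear in the second variable). -/
noncomputable def ann {X : Type*} [AddCommGroup X] [Module ℂ X]
    (ω : X →ₗ[ℂ] X →ₗ⋆[ℂ] ℂ) (l : Submodule ℂ X) : Submodule ℂ X :=
  ⨅ x ∈ l, LinearMap.ker (ω x)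

set_option maxHeartbeats 4000000

/-- In a symplectic vector space, every Fredholm pair `(λ,μ)` of
Lagrangian subspaces has non-positive index
`dim(λ∩μ) − dim X/(λ+μ) ≤ 0`. -/
theorem fredholm_pair_lagrangian_index_nonpos {X : Type*} [AddCommGroup X] [Module ℂ X]
    (ω : X →ₗ[ℂ] X →ₗ⋆[ℂ] ℂ)
    (hskew : ∀ x y, ω y x = - (starRingEnd ℂ) (ω x y))
    (hnd : ∀ x, (∀ y, ω x y = 0) → x = 0)
    (l m : Submodule ℂ X)
    (hl : l = ann ω l) (hm : m = ann ω m)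
    [FiniteDimensional ℂ ↥(l ⊓ m)] [FiniteDimensional ℂ (X ⧸ (l ⊔ m))] :
    (Module.finrank ℂ ↥(l ⊓ m) : ℤ) - Module.finrank ℂ (X ⧸ (l ⊔ m)) ≤ 0 := by
  have hannmem : ∀ (s : Submodule ℂ X) (x : X), x ∈ ann ω s ↔ ∀ z ∈ s, ω z x = 0 := by
    intro s x; simp [ann, Submodule.mem_iInf, LinearMap.mem_ker]
  have hvan : ∀ x ∈ l ⊓ m, ∀ y ∈ l ⊔ m, ω x y = 0 := by
    intro x hx y hy
    have key : ∀ (s : Submodule ℂ X), x ∈ ann ω s → ∀ z ∈ s, ω x z = 0 := by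
      intro s hxs z hz
      have h0 : ω z x = 0 := (hannmem s x).mp hxs z hz
      have h1 := hskew x z
      rw [h0] at h1
      have h2 : (starRingEnd ℂ) (ω x z) = 0 := neg_eq_zero.mp h1.symm
      simpa using congrArg (starRingEnd ℂ) h2
    have h1 : l ≤ LinearMap.ker (ω x) := fun z hz =>
      LinearMap.mem_ker.mpr (key l (hl ▸ hx.1) z hz)
    have h2 : m ≤ LinearMap.ker (ω x) := fun z hz =>
      LinearMap.mem_ker.mpr (key m (hm ▸ hx.2) z hz)
    exact (sup_le h1 h2) hy
  set p := l ⊔ m with hp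
  have hle : ∀ x : ↥(l ⊓ m), p ≤ LinearMap.ker (ω (x : X)) := fun x y hy =>
    LinearMap.mem_ker.mpr (hvan x x.2 y hy)
  -- real-linear map into the real dual of the quotient
  let F : ↥(l ⊓ m) →ₗ[ℝ] ((X ⧸ p) →ₗ[ℝ] ℝ) :=
    { toFun := fun x =>
        { toFun := fun q => (p.liftQ (ω (x : X)) (hle x) q).re
          map_add' := by intro a b; simp
          map_smul' := by
            intro r q
            show ((p.liftQ (ω (x : X)) (hle x)) (r • q)).re
                = r * ((p.liftQ (ω (x : X)) (hle x)) q).re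
            rw [← Complex.coe_smul, LinearMap.map_smulₛₗ, Complex.conj_ofReal, smul_eq_mul]
            simp [Complex.mul_re] }
      map_add' := by
        intro a b
        ext q
        obtain ⟨y, rfl⟩ := Submodule.Quotient.mk_surjective p q
        simp only [LinearMap.coe_mk, AddHom.coe_mk, LinearMap.add_apply,
          Submodule.liftQ_apply, Submodule.coe_add, map_add, LinearMap.add_apply,
          Complex.add_re]
      map_smul' := by
        intro r a
        ext q
        obtain ⟨y, rfl⟩ := Submodule.Quotient.mk_surjective p q
        have hc : ((r • a : ↥(l ⊓ m)) : X) = (r : ℂ) • (a : X) := by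
          rw [Complex.coe_smul]; rfl
        simp only [LinearMap.coe_mk, AddHom.coe_mk, Submodule.liftQ_apply,
          RingHom.id_apply, LinearMap.smul_apply, hc, map_smul, smul_eq_mul,
          LinearMap.smul_apply]
        simp [Complex.mul_re] }
  have hFinj : Function.Injective F := by
    rw [injective_iff_map_eq_zero]
    intro a ha
    have hre : ∀ y : X, (ω (a : X) y).re = 0 := by
      intro y
      have h : (F a) (Submodule.Quotient.mk y)
          = (0 : (X ⧸ p) →ₗ[ℝ] ℝ) (Submodule.Quotient.mk y) := by rw [ha]
      simpa [F] using h
    have hzero : ∀ y : X, ω (a : X) y = 0 := by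
      intro y
      have him : (ω (a : X) (Complex.I • y)).re = 0 := hre _
      rw [LinearMap.map_smulₛₗ] at him
      apply Complex.ext (hre y)
      simpa [Complex.mul_re] using him
    exact Subtype.ext (hnd _ hzero)
  have hled : Module.finrank ℝ ↥(l ⊓ m) ≤ Module.finrank ℝ ((X ⧸ p) →ₗ[ℝ] ℝ) :=
    LinearMap.finrank_le_finrank_of_injective hFinj
  have hdual : Module.finrank ℝ ((X ⧸ p) →ₗ[ℝ] ℝ) = Module.finrank ℝ (X ⧸ p) :=
    Subspace.dual_finrank_eq
  rw [hdual, finrank_real_of_complex, finrank_real_of_complex] at hled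
  have : Module.finrank ℂ ↥(l ⊓ m) ≤ Module.finrank ℂ (X ⧸ p) := by omega
  omega
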